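/- Let f ∈ ℚ[x] with f(0) ≠ 0 have no multiple roots and suppose no root of f is a root of rational. If the Galois-like group G_f^B or the Galois-like group G_f^ℚ is doubly homogeneous as a permutation group on the roots, then the lattice R_f^ℚ is trivial. -/

import Mathlib

noncomputable section

open Polynomial

/-- `z` is a root of rational: some positive power of `z` is rational. -/
def IsRootOfRational (z : ℂ) : Prop := ∃ k : ℕ, 0 < k ∧ ∃ q : ℚ, z ^ k = (q : ℂ)

/-- `z` is a rational number (viewed in `ℂ`). -/
def IsRat (z : ℂ) : Prop := ∃ q : ℚ, z = (q : ℂ)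

/-- The Galois-like group `G_f`: permutations of the (indexed) roots preserving all
multiplicative relations. -/
def GaloisLike {ι : Type*} [Fintype ι] (r : ι → ℂ) : Set (Equiv.Perm ι) :=
  {σ | ∀ v : ι → ℤ, (∏ i, r i ^ v i) = 1 → (∏ i, r (σ i) ^ v i) = 1}

/-- The Galois-like group `G_f^B`. -/
def GaloisLikeB {ι : Type*} [Fintype ι] (r : ι → ℂ) : Set (Equiv.Perm ι) :=
  {σ | ∀ v : ι → ℤ, IsRat (∏ i, r i ^ v i) → (∏ i, r (σ i) ^ v i) = ∏ i, r i ^ v i}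

/-- The Galois-like group `G_f^ℚ`. -/
def GaloisLikeQ {ι : Type*} [Fintype ι] (r : ι → ℂ) : Set (Equiv.Perm ι) :=
  {σ | ∀ v : ι → ℤ, IsRat (∏ i, r i ^ v i) → IsRat (∏ i, r (σ i) ^ v i)}

/-- The exponent lattice of the vector `w` is trivial. -/
def VecLatticeTrivial {ι : Type*} [Fintype ι] (w : ι → ℂ) : Prop :=
  ∀ u : ι → ℤ, (∏ i, w i ^ u i) = 1 → ∀ i j : ι, u i = u j

/-- The lattice `R_w^ℚ` of the vector `w` is trivial. -/
def VecLatticeQTrivial {ι : Type*} [Fintype ι] (w : ι → ℂ) : Prop :=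
  ∀ u : ι → ℤ, IsRat (∏ i, w i ^ u i) → ∀ i j : ι, u i = u j

/-- A subset `M ⊆ ℚ[G/H]` is ℚ-admissible: there is `μ ∈ ℚ[G]` with stabilizer
(under left multiplication) exactly `H` such that `mμ = 0` for all `m ∈ M`
(here `Σ_{g∈G} m(ḡ) • gμ = |H| ⋅ (mμ)`, so we express `mμ = 0` this way). -/
def IsQAdmissible {G : Type*} [Group G] (H : Subgroup G) (M : Set ((G ⧸ H) →₀ ℚ)) : Prop :=
  ∃ μ : MonoidAlgebra ℚ G,
    (∀ g : G, MonoidAlgebra.single g (1 : ℚ) * μ = μ ↔ g ∈ H) ∧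
    ∀ m ∈ M, (∑ᶠ g : G, m (QuotientGroup.mk g) • (MonoidAlgebra.single g (1 : ℚ) * μ)) = 0

/-- A ℚ-subspace of `ℚ[G/H]` is a `ℚ[G]`-submodule iff it is stable under the
permutation action of `G` on `G/H`. -/
def IsGStable {G : Type*} [Group G] (H : Subgroup G) (M : Submodule ℚ ((G ⧸ H) →₀ ℚ)) : Prop :=
  ∀ g : G, ∀ m ∈ M, Finsupp.mapDomain (fun x : G ⧸ H => g • x) m ∈ M

/-- The pair `(G,H)` is ℚ-trivial: the only ℚ-admissible `ℚ[G]`-submodules of `ℚ[G/H]`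
are `0` and `V₁` (the line of constant coefficient vectors). -/
def QTrivialPair {G : Type*} [Group G] (H : Subgroup G) : Prop :=
  ∀ M : Submodule ℚ ((G ⧸ H) →₀ ℚ), IsGStable H M →
    IsQAdmissible H (M : Set ((G ⧸ H) →₀ ℚ)) →
    M = ⊥ ∨ (M : Set ((G ⧸ H) →₀ ℚ)) = {m | ∃ a : ℚ, ∀ x, m x = a}

/-- The action of `G` on `G/H` is transitive. -/
def PairTransitive {G : Type*} [Group G] (H : Subgroup G) : Prop :=
  ∀ x y : G ⧸ H, ∃ g : G, g • x = y

/-- The action of `G` on `G/H` is doubly transitive. -/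
def PairDoublyTransitive {G : Type*} [Group G] (H : Subgroup G) : Prop :=
  ∀ x₁ x₂ y₁ y₂ : G ⧸ H, x₁ ≠ x₂ → y₁ ≠ y₂ → ∃ g : G, g • x₁ = y₁ ∧ g • x₂ = y₂

/-- The action of `G` on `G/H` is doubly homogeneous. -/
def PairDoublyHomogeneous {G : Type*} [Group G] (H : Subgroup G) : Prop :=
  ∀ x₁ x₂ y₁ y₂ : G ⧸ H, x₁ ≠ x₂ → y₁ ≠ y₂ →
    ∃ g : G, ({g • x₁, g • x₂} : Set (G ⧸ H)) = {y₁, y₂}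

/-- A set of permutations of `ι` acts transitively. -/
def SetTransitive {ι : Type*} (S : Set (Equiv.Perm ι)) : Prop :=
  ∀ i j : ι, ∃ σ ∈ S, σ i = j

/-- A set of permutations of `ι` acts doubly transitively. -/
def SetDoublyTransitive {ι : Type*} (S : Set (Equiv.Perm ι)) : Prop :=
  ∀ i j k l : ι, i ≠ j → k ≠ l → ∃ σ ∈ S, σ i = k ∧ σ j = l

/-- A set of permutations of `ι` acts doubly homogeneously. -/
def SetDoublyHomogeneous {ι : Type*} (S : Set (Equiv.Perm ι)) : Prop :=
  ∀ i j k l : ι, i ≠ j → k ≠ l → ∃ σ ∈ S, ({σ i, σ j} : Set ι) = {k, l}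


/-!
The exponent vectors `v` with `∏ rᵢ ^ vᵢ ∈ ℚ` form a subgroup `L ⊆ ℤⁿ` which contains
`(1, …, 1)` (Vieta) and is invariant under the finite permutation group `G = G_f^ℚ ⊇ G_f^B`.
If `u ∈ L` is not constant, average its Gram form over `G`: `C k l = ∑_{σ ∈ G} u(σk) u(σl)` is
symmetric and `G`-invariant, so for `n ≥ 3` double homogeneity forces it to be `a` on the diagonal
and `c < a` off it. Then `∑_{σ ∈ G} (u(σk) - u(σl)) • (u ∘ σ) = (a - c) (e_k - e_l) ∈ L`, and adding
all these for `l ≠ k` to `(a - c) (1, …, 1)` gives `n (a - c) e_k ∈ L`, i.e. `r_k ^ (n (a - c)) ∈ ℚ`.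
For `n = 2` already `u - u_j (1, 1) = (u_i - u_j) e_i`.
-/

open Equiv

theorem isRat_one : IsRat 1 := ⟨1, by simp⟩

theorem IsRat.mul {a b : ℂ} (ha : IsRat a) (hb : IsRat b) : IsRat (a * b) := by
  obtain ⟨p, rfl⟩ := ha
  obtain ⟨q, rfl⟩ := hb
  exact ⟨p * q, by push_cast; ring⟩

theorem IsRat.inv {a : ℂ} (ha : IsRat a) : IsRat a⁻¹ := by
  obtain ⟨p, rfl⟩ := ha
  exact ⟨p⁻¹, by push_cast; ring⟩

theorem isRootOfRational_of_isRat_zpow {z : ℂ} {d : ℤ} (hd : d ≠ 0) (h : IsRat (z ^ d)) :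
    IsRootOfRational z := by
  obtain ⟨q, hq⟩ := h
  rcases hd.lt_or_gt with hneg | hpos
  · refine ⟨(-d).toNat, by omega, q⁻¹, ?_⟩
    rw [← zpow_natCast, Int.toNat_of_nonneg (by omega), zpow_neg, hq, Rat.cast_inv]
  · refine ⟨d.toNat, by omega, q, ?_⟩
    rw [← zpow_natCast, Int.toNat_of_nonneg hpos.le, hq]

theorem ne_zero_of_aeval_eq_zero {f : ℚ[X]} (hf0 : f.eval 0 ≠ 0) {z : ℂ} (hz : aeval z f = 0) :
    z ≠ 0 := by
  rintro rfl
  simp [aeval_def, eval₂_at_zero, ← coeff_zero_eq_eval_zero] at hz hf0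
  exact hf0 hz

theorem isRat_prod_roots {f : ℚ[X]} (hf : f ≠ 0) {n : ℕ} (hn : n = f.natDegree) {r : Fin n → ℂ}
    (hinj : Function.Injective r) (hroot : ∀ i, aeval (r i) f = 0) : IsRat (∏ i, r i) := by
  set F := f.map (algebraMap ℚ ℂ)
  have hF : F ≠ 0 := Polynomial.map_ne_zero hf
  have hsplit : F.Splits := IsAlgClosed.splits F
  have hroots : Finset.univ.val.map r = F.roots := by
    apply Multiset.eq_of_le_of_card_le
    · rw [Multiset.le_iff_subset (Finset.univ.nodup.map hinj)]
      intro z hz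
      obtain ⟨i, -, rfl⟩ := Multiset.mem_map.mp hz
      exact (mem_roots hF).2 (by simpa [F, aeval_def, eval_map] using hroot i)
    · simp [← hsplit.natDegree_eq_card_roots, F, hn]
  have hcoeff := hsplit.coeff_zero_eq_leadingCoeff_mul_prod_roots
  rw [← hroots, natDegree_map, leadingCoeff_map, coeff_map, ← hn,
    ← Finset.prod_eq_multiset_prod] at hcoeff
  have hlc : f.leadingCoeff ≠ 0 := leadingCoeff_ne_zero.mpr hf
  refine ⟨(-1) ^ n * f.coeff 0 / f.leadingCoeff, ?_⟩
  simp only [eq_ratCast] at hcoeff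
  push_cast
  rw [hcoeff]
  field_simp
  rw [← pow_mul, pow_mul', neg_one_sq, one_pow, mul_one]

def Submonoid.toSubgroupOfFinite {G : Type*} [Group G] [Finite G] (S : Submonoid G) :
    Subgroup G where
  __ := S
  inv_mem' {x} hx :=
    Submonoid.powers_le.2 hx (mem_powers_iff_mem_zpowers.2 (inv_mem (Subgroup.mem_zpowers x)))

section Lattice

variable {ι : Type*} [Fintype ι]

def ratLattice (r : ι → ℂ) (hr : ∀ i, r i ≠ 0) : AddSubgroup (ι → ℤ) where
  carrier := {v | IsRat (∏ i, r i ^ v i)}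
  zero_mem' := by simpa using isRat_one
  add_mem' {u v} hu hv := by
    simpa only [Set.mem_ofPred_eq, Pi.add_apply, zpow_add₀ (hr _), Finset.prod_mul_distrib]
      using hu.mul hv
  neg_mem' {v} hv := by simpa [Finset.prod_inv_distrib] using hv.inv

theorem mem_ratLattice {r : ι → ℂ} {hr : ∀ i, r i ≠ 0} {v : ι → ℤ} :
    v ∈ ratLattice r hr ↔ IsRat (∏ i, r i ^ v i) :=
  Iff.rfl

theorem zsmul_single_mem_ratLattice_iff [DecidableEq ι] {r : ι → ℂ} {hr : ∀ i, r i ≠ 0} (d : ℤ)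
    (i : ι) : d • Pi.single i 1 ∈ ratLattice r hr ↔ IsRat (r i ^ d) := by
  simp [mem_ratLattice, Pi.single_apply]

theorem prod_perm_zpow (r : ι → ℂ) (σ : Perm ι) (v : ι → ℤ) :
    ∏ i, r (σ i) ^ v i = ∏ i, r i ^ v (σ⁻¹ i) := by
  simpa using Equiv.prod_comp σ fun i => r i ^ v (σ⁻¹ i)

theorem mem_galoisLikeQ_iff {r : ι → ℂ} {σ : Perm ι} :
    σ ∈ GaloisLikeQ r ↔ ∀ v : ι → ℤ, IsRat (∏ i, r i ^ v i) → IsRat (∏ i, r i ^ v (σ⁻¹ i)) := by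
  simp only [GaloisLikeQ, Set.mem_ofPred_eq, prod_perm_zpow]

theorem galoisLikeB_subset_galoisLikeQ (r : ι → ℂ) : GaloisLikeB r ⊆ GaloisLikeQ r :=
  fun _ hσ v hv => (hσ v hv) ▸ hv

def galoisLikeQSubgroup (r : ι → ℂ) : Subgroup (Perm ι) :=
  Submonoid.toSubgroupOfFinite
    { carrier := GaloisLikeQ r
      one_mem' := mem_galoisLikeQ_iff.2 fun _ hv => by simpa using hv
      mul_mem' {σ τ} hσ hτ := mem_galoisLikeQ_iff.2 fun v hv => by
        simpa [mul_inv_rev] using mem_galoisLikeQ_iff.1 hσ _ (mem_galoisLikeQ_iff.1 hτ v hv) }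

theorem comp_mem_ratLattice {r : ι → ℂ} {hr : ∀ i, r i ≠ 0} {σ : Perm ι}
    (hσ : σ ∈ galoisLikeQSubgroup r) {v : ι → ℤ} (hv : v ∈ ratLattice r hr) :
    v ∘ σ ∈ ratLattice r hr := by
  simpa [mem_ratLattice] using mem_galoisLikeQ_iff.1 (inv_mem hσ) v hv

end Lattice

section Combinatorics

variable {ι : Type*}

theorem SetDoublyHomogeneous.mono {S T : Set (Perm ι)} (hST : S ⊆ T)
    (h : SetDoublyHomogeneous S) : SetDoublyHomogeneous T := fun i j k l hij hkl =>
  let ⟨σ, hσ, hpair⟩ := h i j k l hij hkl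
  ⟨σ, hST hσ, hpair⟩

theorem SetDoublyHomogeneous.setTransitive [Fintype ι] {G : Subgroup (Perm ι)}
    (hG : SetDoublyHomogeneous (G : Set (Perm ι))) (hcard : 2 < Fintype.card ι) :
    SetTransitive (G : Set (Perm ι)) := by
  classical
  intro k l
  obtain rfl | hkl := eq_or_ne k l
  · exact ⟨1, G.one_mem, rfl⟩
  obtain ⟨p, -, hp⟩ := Finset.exists_mem_notMem_of_card_lt_card
    (s := {k, l}) (t := Finset.univ) ((Finset.card_le_two).trans_lt hcard)
  simp only [Finset.mem_insert, Finset.mem_singleton, not_or] at hp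
  -- `σ` maps `{k, p}` onto `{l, p}`: either `σ k = l`, or `σ` swaps the roles and `σ ^ 2 k = l`.
  obtain ⟨σ, hσ, hpair⟩ := hG k p l p (Ne.symm hp.1) (Ne.symm hp.2)
  rcases Set.pair_eq_pair_iff.mp hpair with ⟨h1, -⟩ | ⟨h1, h2⟩
  · exact ⟨σ, hσ, h1⟩
  · exact ⟨σ * σ, G.mul_mem hσ hσ, by rw [Perm.mul_apply, h1, h2]⟩

variable {β : Type*} {S : Set (Perm ι)} {C : ι → ι → β}

theorem SetDoublyHomogeneous.apply_eq_apply_of_ne (hS : SetDoublyHomogeneous S)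
    (hsymm : ∀ k l, C k l = C l k) (hinv : ∀ σ ∈ S, ∀ k l, C (σ k) (σ l) = C k l)
    {k l k' l' : ι} (hkl : k ≠ l) (hkl' : k' ≠ l') : C k l = C k' l' := by
  obtain ⟨σ, hσ, hpair⟩ := hS k l k' l' hkl hkl'
  rcases Set.pair_eq_pair_iff.mp hpair with ⟨h1, h2⟩ | ⟨h1, h2⟩
  · rw [← h1, ← h2, hinv σ hσ]
  · rw [← h1, ← h2, hinv σ hσ, hsymm]

theorem SetTransitive.apply_self_eq (hS : SetTransitive S)
    (hinv : ∀ σ ∈ S, ∀ k l, C (σ k) (σ l) = C k l) (k k' : ι) : C k k = C k' k' := by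
  obtain ⟨σ, hσ, rfl⟩ := hS k k'
  exact (hinv σ hσ k k).symm

end Combinatorics

section OrbitGram

variable {ι : Type*} (G : Subgroup (Perm ι)) [Fintype G] (u : ι → ℤ)

def orbitGram (k l : ι) : ℤ := ∑ σ : G, u ((σ : Perm ι) k) * u ((σ : Perm ι) l)

theorem orbitGram_comm (k l : ι) : orbitGram G u k l = orbitGram G u l k :=
  Finset.sum_congr rfl fun _ _ => mul_comm _ _

theorem orbitGram_apply_apply {τ : Perm ι} (hτ : τ ∈ G) (k l : ι) :
    orbitGram G u (τ k) (τ l) = orbitGram G u k l :=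
  Equiv.sum_comp (Equiv.mulRight (⟨τ, hτ⟩ : G)) fun σ : G =>
    u ((σ : Perm ι) k) * u ((σ : Perm ι) l)

theorem orbitGram_sub_orbitGram (k l x : ι) :
    orbitGram G u k x - orbitGram G u l x
      = ∑ σ : G, (u ((σ : Perm ι) k) - u ((σ : Perm ι) l)) * u ((σ : Perm ι) x) := by
  simp only [orbitGram, ← Finset.sum_sub_distrib, sub_mul]

theorem orbitGram_self_add_self_sub (k l : ι) :
    orbitGram G u k k - orbitGram G u k l + (orbitGram G u l l - orbitGram G u l k)
      = ∑ σ : G, (u ((σ : Perm ι) k) - u ((σ : Perm ι) l)) ^ 2 := by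
  simp only [orbitGram, ← Finset.sum_sub_distrib, ← Finset.sum_add_distrib]
  exact Finset.sum_congr rfl fun _ _ => by ring

end OrbitGram

section InvariantLattice

variable {ι : Type*} [Fintype ι] [DecidableEq ι] {L : AddSubgroup (ι → ℤ)}
  {G : Subgroup (Perm ι)}

theorem exists_zsmul_single_sub_single_mem (hL : ∀ σ ∈ G, ∀ v ∈ L, v ∘ σ ∈ L)
    (hG : SetDoublyHomogeneous (G : Set (Perm ι))) (hcard : 2 < Fintype.card ι) {u : ι → ℤ}
    (hu : u ∈ L) {i j : ι} (hij : u i ≠ u j) :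
    ∃ t : ℤ, t ≠ 0 ∧ ∀ k l, t • (Pi.single k 1 - Pi.single l 1 : ι → ℤ) ∈ L := by
  classical
  set C := orbitGram G u
  have hinv : ∀ σ ∈ (G : Set (Perm ι)), ∀ k l, C (σ k) (σ l) = C k l :=
    fun _ hσ => orbitGram_apply_apply G u hσ
  have hoff {k l k' l' : ι} : k ≠ l → k' ≠ l' → C k l = C k' l' :=
    hG.apply_eq_apply_of_ne (orbitGram_comm G u) hinv
  have hdiag : ∀ k k', C k k = C k' k' := (hG.setTransitive hcard).apply_self_eq hinv
  have hne : i ≠ j := fun h => hij (h ▸ rfl)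
  refine ⟨C i i - C i j, ?_, fun k l => ?_⟩
  · have hsq : 0 < ∑ σ : G, (u ((σ : Perm ι) i) - u ((σ : Perm ι) j)) ^ 2 := by
      refine Finset.sum_pos' (fun _ _ => sq_nonneg _) ⟨1, Finset.mem_univ _, ?_⟩
      simpa using sq_pos_of_ne_zero (sub_ne_zero.2 hij)
    have h2 : C i i - C i j + (C j j - C j i) = _ := orbitGram_self_add_self_sub G u i j
    rw [hdiag j i, hoff hne.symm hne] at h2
    omega
  obtain rfl | hkl := eq_or_ne k l
  · simp
  have hsum : (C i i - C i j) • (Pi.single k 1 - Pi.single l 1 : ι → ℤ)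
      = ∑ σ : G, (u ((σ : Perm ι) k) - u ((σ : Perm ι) l)) • (u ∘ σ) := by
    ext x
    simp only [Finset.sum_apply, Pi.smul_apply, Function.comp_apply, smul_eq_mul,
      ← orbitGram_sub_orbitGram]
    obtain rfl | hxk := eq_or_ne x k
    · simp [hkl, hdiag x i, hoff (Ne.symm hkl) hne, C]
    obtain rfl | hxl := eq_or_ne x l
    · simp [hxk, hdiag x i, hoff hkl hne, C]
    · simp [hxk, hxl, hoff (Ne.symm hxk) hne, hoff (Ne.symm hxl) hne, C]
  rw [hsum]
  exact L.sum_mem fun σ _ => L.zsmul_mem (hL σ σ.2 u hu) _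

theorem exists_zsmul_single_mem (h1 : (1 : ι → ℤ) ∈ L) (hL : ∀ σ ∈ G, ∀ v ∈ L, v ∘ σ ∈ L)
    (hG : SetDoublyHomogeneous (G : Set (Perm ι))) {u : ι → ℤ} (hu : u ∈ L) {i j : ι}
    (hij : u i ≠ u j) : ∃ d : ℤ, d ≠ 0 ∧ d • Pi.single i 1 ∈ L := by
  have hne : i ≠ j := fun h => hij (h ▸ rfl)
  by_cases hcard : 2 < Fintype.card ι
  · obtain ⟨t, ht, hmem⟩ := exists_zsmul_single_sub_single_mem hL hG hcard hu hij
    refine ⟨Fintype.card ι * t, mul_ne_zero (by positivity) ht, ?_⟩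
    have hsum : (Fintype.card ι * t) • Pi.single i 1
        = t • 1 + ∑ l, t • (Pi.single i 1 - Pi.single l 1 : ι → ℤ) := by
      ext x
      obtain rfl | hxi := eq_or_ne x i
      · simp [Finset.sum_apply, Pi.single_apply, mul_sub, Finset.sum_sub_distrib]
      · simp [Finset.sum_apply, Pi.single_apply, hxi]
    rw [hsum]
    exact L.add_mem (L.zsmul_mem h1 t) (L.sum_mem fun l _ => hmem i l)
  · have huniv : ∀ x, x = i ∨ x = j := by
      have hpair : ({i, j} : Finset ι) = Finset.univ :=
        Finset.eq_univ_of_card _ (by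
          have := Finset.card_le_univ ({i, j} : Finset ι)
          rw [Finset.card_pair hne] at this ⊢
          omega)
      simpa [Finset.ext_iff] using hpair
    refine ⟨u i - u j, sub_ne_zero.2 hij, ?_⟩
    have hsub : (u i - u j) • Pi.single i 1 = u - u j • 1 := by
      ext x
      rcases huniv x with rfl | rfl
      · simp
      · simp [hne.symm]
    rw [hsub]
    exact L.sub_mem hu (L.zsmul_mem h1 _)

end InvariantLattice

theorem statement15_general (f : Polynomial ℚ) (hf0 : f.eval 0 ≠ 0) (n : ℕ) (hn : n = f.natDegree)
    (r : Fin n → ℂ) (hinj : Function.Injective r)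
    (hroot : ∀ i, Polynomial.aeval (r i) f = 0)
    (hnr : ∀ i, ¬ IsRootOfRational (r i))
    (h2h : SetDoublyHomogeneous (GaloisLikeB r) ∨ SetDoublyHomogeneous (GaloisLikeQ r)) :
    VecLatticeQTrivial r := by
  have hr : ∀ i, r i ≠ 0 := fun i => ne_zero_of_aeval_eq_zero hf0 (hroot i)
  have hf : f ≠ 0 := by rintro rfl; simp at hf0
  have h1 : (1 : Fin n → ℤ) ∈ ratLattice r hr := by
    simpa [mem_ratLattice] using isRat_prod_roots hf hn hinj hroot
  have hG : SetDoublyHomogeneous (galoisLikeQSubgroup r : Set (Perm (Fin n))) :=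
    h2h.elim (·.mono (galoisLikeB_subset_galoisLikeQ r)) id
  intro u hu i j
  by_contra hij
  obtain ⟨d, hd, hmem⟩ :=
    exists_zsmul_single_mem h1 (fun _ hσ _ => comp_mem_ratLattice hσ) hG hu hij
  exact hnr i (isRootOfRational_of_isRat_zpow hd ((zsmul_single_mem_ratLattice_iff d i).1 hmem))

/-- Let `f ∈ ℚ[x]` with `f(0) ≠ 0` have no multiple roots and suppose
no root of `f` is a root of rational. If `G_f^B` or `G_f^ℚ` is doubly homogeneous as a
permutation group on the roots, then the lattice `R_f^ℚ` is trivial. -/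
theorem statement15 (f : Polynomial ℚ) (hf0 : f.eval 0 ≠ 0) (n : ℕ) (hn : n = f.natDegree)
    (r : Fin n → ℂ) (hinj : Function.Injective r)
    (hroot : ∀ i, Polynomial.aeval (r i) f = 0)
    (hall : ∀ z : ℂ, Polynomial.aeval z f = 0 → ∃ i, r i = z)
    (hnr : ∀ i, ¬ IsRootOfRational (r i))
    (h2h : SetDoublyHomogeneous (GaloisLikeB r) ∨ SetDoublyHomogeneous (GaloisLikeQ r)) :
    VecLatticeQTrivial r :=
  statement15_general f hf0 n hn r hinj hroot hnr h2h
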